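/- Let u be a degree-two vertex in a finite simple graph G with neighbors v and w that are adjacent, and suppose v and w have no common neighbor other than u. Then {u, v, w} is a maximal clique of G, and moreover {v, w} is not contained in any clique of G - u of size ≥ 3; hence the maximal cliques of size ≥ 2 of G are exactly {u,v,w} together with the maximal cliques of size ≥ 2 of the graph obtained from G by deleting u and the edge (v,w). -/

import Mathlib

open SimpleGraph

/-- A maximal clique: a clique not properly contained in any other clique. -/
def MaximalClique {V : Type*} (G : SimpleGraph V) (S : Set V) : Prop :=
  G.IsClique S ∧ ∀ T : Set V, G.IsClique T → S ⊆ T → S = T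

/-- The graph obtained from `G` by deleting vertex `u` (removing all its incident edges). -/
def delVert {V : Type*} (G : SimpleGraph V) (u : V) : SimpleGraph V where
  Adj a b := G.Adj a b ∧ a ≠ u ∧ b ≠ u
  symm := by constructor; intro a b h; exact ⟨h.1.symm, h.2.2, h.2.1⟩
  loopless := by constructor; intro a h; exact h.1.ne rfl

/-! A clique of `G` not contained in `{u, v, w}` avoids `u`, whose only neighbours are `v` and `w`,
and does not contain both `v` and `w`, whose only common neighbour is `u`; so it is a clique of
`G - u - vw`. Conversely, a clique of `G - u - vw` with at least two vertices contains an edge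
other than `vw` avoiding `u`, so it is not contained in `{u, v, w}`. Hence, apart from `{u, v, w}`
itself, the maximal cliques with an edge are the same in both graphs. -/

namespace SimpleGraph

variable {V : Type*} {G : SimpleGraph V} {S : Set V} {u v w : V}

theorem IsClique.diff_singleton_subset_neighborSet (hS : G.IsClique S) (hu : u ∈ S) :
    S \ {u} ⊆ G.neighborSet u :=
  fun _ hx => hS hu hx.1 (Ne.symm hx.2)

theorem IsClique.diff_pair_subset_inter_neighborSet (hS : G.IsClique S) (hv : v ∈ S)
    (hw : w ∈ S) : S \ {v, w} ⊆ G.neighborSet v ∩ G.neighborSet w := by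
  rintro x ⟨hx, hxvw⟩
  simp only [Set.mem_insert_iff, Set.mem_singleton_iff, not_or] at hxvw
  exact ⟨hS hv hx (Ne.symm hxvw.1), hS hw hx (Ne.symm hxvw.2)⟩

theorem isClique_triple (huv : G.Adj u v) (huw : G.Adj u w) (hvw : G.Adj v w) :
    G.IsClique {u, v, w} := by
  simp [isClique_insert, huv, huw, hvw]

theorem IsClique.subset_triple_of_mem (hu : G.neighborSet u = {v, w}) (hS : G.IsClique S)
    (huS : u ∈ S) : S ⊆ {u, v, w} := by
  rw [← Set.singleton_union, ← hu, ← Set.sdiff_subset_iff]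
  exact hS.diff_singleton_subset_neighborSet huS

theorem IsClique.subset_triple_of_mem_of_mem (hcn : G.neighborSet v ∩ G.neighborSet w = {u})
    (hS : G.IsClique S) (hv : v ∈ S) (hw : w ∈ S) : S ⊆ {u, v, w} := by
  have h := hS.diff_pair_subset_inter_neighborSet hv hw
  rwa [hcn, Set.sdiff_subset_iff, Set.union_singleton] at h

end SimpleGraph

section DegreeTwoVertex

variable {V : Type*} {G H : SimpleGraph V} {S : Set V} {u v w : V}

theorem MaximalClique.of_le (hS : MaximalClique G S) (hHG : H ≤ G) (hH : H.IsClique S) :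
    MaximalClique H S :=
  ⟨hH, fun T hT hST => hS.2 T (hT.mono hHG) hST⟩

theorem delVert_le (G : SimpleGraph V) (u : V) : delVert G u ≤ G :=
  fun _ _ h => h.1

theorem maximalClique_triple (hu : G.neighborSet u = {v, w}) (hadj : G.Adj v w) :
    MaximalClique G {u, v, w} := by
  have huv : G.Adj u v := by simp [← mem_neighborSet, hu]
  have huw : G.Adj u w := by simp [← mem_neighborSet, hu]
  refine ⟨isClique_triple huv huw hadj, fun T hT hsub => ?_⟩
  exact hsub.antisymm (hT.subset_triple_of_mem hu (hsub (Set.mem_insert u _)))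

theorem ncard_le_two_of_isClique_delVert (hcn : G.neighborSet v ∩ G.neighborSet w = {u})
    (hS : (delVert G u).IsClique S) (hv : v ∈ S) (hw : w ∈ S) : S.ncard ≤ 2 := by
  have hvu : G.Adj v u := (hcn.ge (Set.mem_singleton u)).1
  have huS : u ∉ S := fun huS => (hS hv huS hvu.ne).2.2 rfl
  have hsub : S ⊆ {v, w} := (Set.subset_insert_iff_of_notMem huS).1 <|
    (hS.mono (delVert_le G u)).subset_triple_of_mem_of_mem hcn hv hw
  calc S.ncard ≤ ({v, w} : Set V).ncard := Set.ncard_le_ncard hsub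
    _ ≤ 2 := (Set.ncard_insert_le v {w}).trans (by rw [Set.ncard_singleton])

theorem isClique_delVert_deleteEdges_of_not_subset (hu : G.neighborSet u = {v, w})
    (hcn : G.neighborSet v ∩ G.neighborSet w = {u}) (hS : G.IsClique S)
    (hS' : ¬S ⊆ {u, v, w}) : ((delVert G u).deleteEdges {s(v, w)}).IsClique S := by
  have huS : u ∉ S := fun huS => hS' (hS.subset_triple_of_mem hu huS)
  have hvw : ¬(v ∈ S ∧ w ∈ S) := fun h => hS' (hS.subset_triple_of_mem_of_mem hcn h.1 h.2)
  intro a ha b hb hab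
  refine SimpleGraph.deleteEdges_adj.2
    ⟨⟨hS ha hb hab, ne_of_mem_of_not_mem ha huS, ne_of_mem_of_not_mem hb huS⟩, ?_⟩
  rw [Set.mem_singleton_iff, Sym2.eq_iff]
  rintro (⟨rfl, rfl⟩ | ⟨rfl, rfl⟩)
  exacts [hvw ⟨ha, hb⟩, hvw ⟨hb, ha⟩]

theorem not_subset_triple_of_isClique_delVert_deleteEdges
    (hS : ((delVert G u).deleteEdges {s(v, w)}).IsClique S) (hS2 : 2 ≤ S.ncard) :
    ¬S ⊆ {u, v, w} := by
  obtain ⟨a, b, ha, hb, hab⟩ :=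
    (Set.one_lt_ncard_iff (Set.finite_of_ncard_pos (by omega))).1 hS2
  obtain ⟨⟨-, hau, hbu⟩, hvw⟩ := SimpleGraph.deleteEdges_adj.1 (hS ha hb hab)
  intro hsub
  have ha' := hsub ha
  have hb' := hsub hb
  simp only [Set.mem_insert_iff, Set.mem_singleton_iff, Sym2.eq_iff] at ha' hb' hvw
  grind

theorem setOf_maximalClique_eq_insert_triple (hu : G.neighborSet u = {v, w})
    (hadj : G.Adj v w) (hcn : G.neighborSet v ∩ G.neighborSet w = {u}) :
    {S : Set V | MaximalClique G S ∧ 2 ≤ S.ncard} =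
      insert {u, v, w}
        {S : Set V |
          MaximalClique ((delVert G u).deleteEdges {s(v, w)}) S ∧ 2 ≤ S.ncard} := by
  have hle : (delVert G u).deleteEdges {s(v, w)} ≤ G :=
    (SimpleGraph.deleteEdges_le _).trans (delVert_le G u)
  ext S
  simp only [Set.mem_ofPred_eq, Set.mem_insert_iff]
  constructor
  · rintro ⟨hS, hS2⟩
    by_cases hsub : S ⊆ {u, v, w}
    · exact Or.inl (hS.2 _ (maximalClique_triple hu hadj).1 hsub)
    · exact Or.inr
        ⟨hS.of_le hle (isClique_delVert_deleteEdges_of_not_subset hu hcn hS.1 hsub), hS2⟩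
  · rintro (rfl | ⟨hS, hS2⟩)
    · refine ⟨maximalClique_triple hu hadj, ?_⟩
      calc 2 = ({v, w} : Set V).ncard := (Set.ncard_pair hadj.ne).symm
        _ ≤ ({u, v, w} : Set V).ncard := Set.ncard_le_ncard (Set.subset_insert u _)
    · have hS' := not_subset_triple_of_isClique_delVert_deleteEdges hS.1 hS2
      refine ⟨⟨hS.1.mono hle, fun T hT hST => hS.2 T ?_ hST⟩, hS2⟩
      exact isClique_delVert_deleteEdges_of_not_subset hu hcn hT fun h => hS' (hST.trans h)

end DegreeTwoVertex

theorem stmt_3_general {V : Type*} (G : SimpleGraph V) (u v w : V)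
    (hu : G.neighborSet u = {v, w}) (hadj : G.Adj v w)
    (hcn : G.neighborSet v ∩ G.neighborSet w = {u}) :
    MaximalClique G {u, v, w} ∧
    (∀ S : Set V, (delVert G u).IsClique S → v ∈ S → w ∈ S → ¬ 3 ≤ S.ncard) ∧
    {S : Set V | MaximalClique G S ∧ 2 ≤ S.ncard} =
      insert {u, v, w}
        {S : Set V |
          MaximalClique ((delVert G u).deleteEdges {s(v, w)}) S ∧ 2 ≤ S.ncard} :=
  ⟨maximalClique_triple hu hadj,
    fun _ hS hv hw => (ncard_le_two_of_isClique_delVert hcn hS hv hw).not_gt,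
    setOf_maximalClique_eq_insert_triple hu hadj hcn⟩

theorem stmt_3 {V : Type*} [Fintype V] (G : SimpleGraph V) (u v w : V)
    (hvw : v ≠ w) (hu : G.neighborSet u = {v, w}) (hadj : G.Adj v w)
    (hcn : G.neighborSet v ∩ G.neighborSet w = {u}) :
    MaximalClique G {u, v, w} ∧
    (∀ S : Set V, (delVert G u).IsClique S → v ∈ S → w ∈ S → ¬ 3 ≤ S.ncard) ∧
    {S : Set V | MaximalClique G S ∧ 2 ≤ S.ncard} =
      insert {u, v, w}
        {S : Set V |
          MaximalClique ((delVert G u).deleteEdges {s(v, w)}) S ∧ 2 ≤ S.ncard} :=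
  stmt_3_general G u v w hu hadj hcn
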